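/- Let (λ_k, x_k, v_k) be generated by the semi-implicit scheme: θ_k(λ_{k+1} − λ_k)/α_k = A v_{k+1} − b; (x_{k+1} − x_k)/α_k = v_{k+1} − x_{k+1}; γ_k(v_{k+1} − v_k)/α_k = μ_β(x_{k+1} − v_{k+1}) − (ξ_{k+1} + Aᵀλ̂_k) with ξ_{k+1} ∈ ∂f_β(x_{k+1}) + N_X(x_{k+1}) and λ̂_k = λ_k + (α_k/θ_k)(A v_k − b), with x₀ ∈ X, v₀ ∈ ℝⁿ, θ_{k+1} = θ_k/(1+α_k), γ_{k+1} = (γ_k + μ_β α_k)/(1+α_k), θ₀ = 1, γ₀ > 0, and step sizes chosen so that γ_k θ_k = ‖A‖² α_k². Define E_k = L_β(x_k, λ*) − L_β(x*, λ_k) + (γ_k/2)‖v_k − x*‖² + (θ_k/2)‖λ_k − λ*‖². Then x_k ∈ X for all k and E_{k+1} − E_k ≤ −α_k E_{k+1} for all k ∈ ℕ. -/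

import Mathlib

open scoped RealInnerProductSpace Pointwise

/-!
Equivalently `(1 + α_k) E_{k+1} ≤ E_k`. By the sum rule
`∂f_β = ∂f + β Aᵀ(A · - b)` (proved by letting `t ↓ 0` in the convexity inequality along
`x + t (y - x)`), `f_β + δ_X` is `μ_β`-strongly convex, with `μ_β = μ + β σ_min(A)²`. Tested
at `x_k` and at `x*` in the point `x_{k+1}`, this bounds the change of the function values. The
three-point identity `‖u' - p‖² - ‖u - p‖² = 2⟪u' - u, u' - p⟫ - ‖u' - u‖²` turns the changes of
`‖v - x*‖²` and `‖λ - λ*‖²` into inner products with the updates, and substituting the scheme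
makes the terms in `ξ_{k+1}` and in `λ*` cancel. The `μ_β`-terms add up to
`-(α_k μ_β / 2) ‖x_{k+1} - v_{k+1}‖² ≤ 0`. What remains is the cross term
`α_k ⟪A (v_{k+1} - v_k), λ_{k+1} - λ_k⟫`, and since `γ_k θ_k = ‖A‖² α_k²`, Young's inequality
absorbs it into `-(θ_k / 2) ‖λ_{k+1} - λ_k‖² - (γ_k / 2) ‖v_{k+1} - v_k‖²`.
-/

/-- The smallest singular value of a linear map between Euclidean spaces. -/
noncomputable def sigmaMin {n m : ℕ}
    (A : EuclideanSpace ℝ (Fin n) →L[ℝ] EuclideanSpace ℝ (Fin m)) : ℝ :=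
  sInf {c : ℝ | ∃ x : EuclideanSpace ℝ (Fin n), ‖x‖ = 1 ∧ ‖A x‖ = c}

/-- The convex subdifferential. -/
def subdiff {n : ℕ} (f : EuclideanSpace ℝ (Fin n) → ℝ)
    (x : EuclideanSpace ℝ (Fin n)) : Set (EuclideanSpace ℝ (Fin n)) :=
  {p | ∀ y, f x + ⟪p, y - x⟫ ≤ f y}

/-- The normal cone of `X` at `x` (empty if `x ∉ X`). -/
def normalCone {n : ℕ} (X : Set (EuclideanSpace ℝ (Fin n)))
    (x : EuclideanSpace ℝ (Fin n)) : Set (EuclideanSpace ℝ (Fin n)) :=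
  {p | x ∈ X ∧ ∀ z ∈ X, ⟪p, z - x⟫ ≤ 0}

open Set Filter Topology ContinuousLinearMap

def StrongSubgradIneqOn {n : ℕ} (X : Set (EuclideanSpace ℝ (Fin n)))
    (g : EuclideanSpace ℝ (Fin n) → ℝ) (c : ℝ) : Prop :=
  ∀ z ∈ X, ∀ p ∈ subdiff g z, ∀ y ∈ X, g z + ⟪p, y - z⟫ + c / 2 * ‖y - z‖ ^ 2 ≤ g y

section SigmaMin

variable {n m : ℕ} (A : EuclideanSpace ℝ (Fin n) →L[ℝ] EuclideanSpace ℝ (Fin m))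

theorem sigmaMin_nonneg : 0 ≤ sigmaMin A :=
  Real.sInf_nonneg (by rintro _ ⟨x, -, rfl⟩; positivity)

theorem sigmaMin_mul_norm_le (w : EuclideanSpace ℝ (Fin n)) : sigmaMin A * ‖w‖ ≤ ‖A w‖ := by
  rcases eq_or_ne w 0 with rfl | hw
  · simp
  have hw' : 0 < ‖w‖ := norm_pos_iff.mpr hw
  have hle : sigmaMin A ≤ ‖A (‖w‖⁻¹ • w)‖ :=
    csInf_le ⟨0, by rintro _ ⟨x, -, rfl⟩; positivity⟩ ⟨_, norm_smul_inv_norm hw, rfl⟩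
  rwa [map_smul, norm_smul, norm_inv, norm_norm, le_inv_mul_iff₀ hw', mul_comm] at hle

theorem sigmaMin_sq_mul_norm_sq_le (w : EuclideanSpace ℝ (Fin n)) :
    sigmaMin A ^ 2 * ‖w‖ ^ 2 ≤ ‖A w‖ ^ 2 := by
  rw [← mul_pow]
  exact pow_le_pow_left₀ (mul_nonneg (sigmaMin_nonneg A) (norm_nonneg w))
    (sigmaMin_mul_norm_le A w) 2

end SigmaMin

theorem norm_map_sub_sq_eq {E F : Type*} [NormedAddCommGroup E] [InnerProductSpace ℝ E]
    [NormedAddCommGroup F] [InnerProductSpace ℝ F] (A : E →L[ℝ] F) (b : F) (z y : E) :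
    ‖A y - b‖ ^ 2 = ‖A z - b‖ ^ 2 + 2 * ⟪A z - b, A (y - z)⟫ + ‖A (y - z)‖ ^ 2 := by
  rw [map_sub, ← norm_add_sq_real]
  congr 2
  abel

section Subdiff

variable {n m : ℕ} (A : EuclideanSpace ℝ (Fin n) →L[ℝ] EuclideanSpace ℝ (Fin m))
  (b : EuclideanSpace ℝ (Fin m)) {f : EuclideanSpace ℝ (Fin n) → ℝ} {β : ℝ}

theorem sub_smul_adjoint_mem_subdiff (hf : ConvexOn ℝ univ f) {z p : EuclideanSpace ℝ (Fin n)}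
    (hp : p ∈ subdiff (fun y => f y + β / 2 * ‖A y - b‖ ^ 2) z) :
    p - β • adjoint A (A z - b) ∈ subdiff f z := by
  intro y
  have hinner : ⟪p - β • adjoint A (A z - b), y - z⟫ = ⟪p, y - z⟫ - β * ⟪A z - b, A (y - z)⟫ := by
    rw [inner_sub_left, real_inner_smul_left, adjoint_inner_left]
  have hbound : ∀ t ∈ Ioo (0 : ℝ) 1,
      f z + ⟪p - β • adjoint A (A z - b), y - z⟫ ≤ f y + t * (β / 2 * ‖A (y - z)‖ ^ 2) := by
    rintro t ⟨ht0, ht1⟩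
    have hcv : f (z + t • (y - z)) ≤ (1 - t) * f z + t * f y := by
      have := hf.2 (mem_univ z) (mem_univ y) (sub_nonneg.mpr ht1.le) ht0.le (sub_add_cancel 1 t)
      rwa [show (1 - t) • z + t • y = z + t • (y - z) by module] at this
    have hsub := hp (z + t • (y - z))
    simp only [add_sub_cancel_left, real_inner_smul_right] at hsub
    rw [norm_map_sub_sq_eq A b z (z + t • (y - z)), add_sub_cancel_left, map_smul,
      real_inner_smul_right, norm_smul, Real.norm_eq_abs, abs_of_pos ht0] at hsub
    rw [hinner]
    refine le_of_mul_le_mul_left ?_ ht0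
    linear_combination hsub + hcv
  have hlim : Tendsto (fun t : ℝ => f y + t * (β / 2 * ‖A (y - z)‖ ^ 2)) (𝓝[>] 0) (𝓝 (f y)) := by
    have : Continuous (fun t : ℝ => f y + t * (β / 2 * ‖A (y - z)‖ ^ 2)) := by fun_prop
    simpa using this.continuousWithinAt.tendsto (x := 0) (s := Ioi 0)
  exact ge_of_tendsto hlim (eventually_of_mem (Ioo_mem_nhdsGT one_pos) hbound)

theorem strongSubgradIneqOn_add_penalty {X : Set (EuclideanSpace ℝ (Fin n))} {μ : ℝ}
    (hf : ConvexOn ℝ univ f) (hβ : 0 ≤ β) (hsc : StrongSubgradIneqOn X f μ) :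
    StrongSubgradIneqOn X (fun y => f y + β / 2 * ‖A y - b‖ ^ 2) (μ + β * sigmaMin A ^ 2) := by
  intro z hz p hp y hy
  have hfz := hsc z hz _ (sub_smul_adjoint_mem_subdiff A b hf hp) y hy
  rw [inner_sub_left, real_inner_smul_left, adjoint_inner_left] at hfz
  have hσ := mul_le_mul_of_nonneg_left (sigmaMin_sq_mul_norm_sq_le A (y - z)) hβ
  linear_combination hfz + hσ / 2 - β / 2 * norm_map_sub_sq_eq A b z y

end Subdiff

theorem StrongSubgradIneqOn.of_mem_add_normalCone {n : ℕ} {X : Set (EuclideanSpace ℝ (Fin n))}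
    {g : EuclideanSpace ℝ (Fin n) → ℝ} {c : ℝ} (hg : StrongSubgradIneqOn X g c)
    {z ξ : EuclideanSpace ℝ (Fin n)} (hξ : ξ ∈ subdiff g z + normalCone X z) :
    z ∈ X ∧ ∀ y ∈ X, g z + ⟪ξ, y - z⟫ + c / 2 * ‖y - z‖ ^ 2 ≤ g y := by
  obtain ⟨p, hp, q, ⟨hz, hq⟩, rfl⟩ := hξ
  refine ⟨hz, fun y hy => ?_⟩
  rw [inner_add_left]
  linarith [hg z hz p hp y hy, hq y hy]

theorem norm_sub_sq_sub_norm_sub_sq {E : Type*} [NormedAddCommGroup E] [InnerProductSpace ℝ E]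
    (u u' p : E) : ‖u' - p‖ ^ 2 - ‖u - p‖ ^ 2 = 2 * ⟪u' - u, u' - p⟫ - ‖u' - u‖ ^ 2 := by
  rw [show u - p = (u' - p) - (u' - u) by abel, norm_sub_sq_real (u' - p), real_inner_comm]
  ring

theorem smul_eq_smul_of_div_smul_eq {M : Type*} [AddCommGroup M] [Module ℝ M] {a c : ℝ}
    {u w : M} (ha : a ≠ 0) (h : (c / a) • u = w) : c • u = a • w := by
  rw [← h, smul_smul, mul_div_cancel₀ _ ha]

section Lyapunov

variable {E F : Type*} [NormedAddCommGroup E] [InnerProductSpace ℝ E]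
  [NormedAddCommGroup F] [InnerProductSpace ℝ F] (A : E →L[ℝ] F)

theorem mul_inner_map_le {a θ γ : ℝ} (ha : 0 ≤ a) (hθ : 0 < θ) (h : γ * θ = ‖A‖ ^ 2 * a ^ 2)
    (d : E) (w : F) : a * ⟪A d, w⟫ ≤ θ / 2 * ‖w‖ ^ 2 + γ / 2 * ‖d‖ ^ 2 := by
  have hcs : ⟪A d, w⟫ ≤ ‖A‖ * ‖d‖ * ‖w‖ :=
    (real_inner_le_norm _ _).trans (mul_le_mul_of_nonneg_right (A.le_opNorm d) (norm_nonneg w))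
  refine le_of_mul_le_mul_left ?_ hθ
  nlinarith [mul_le_mul_of_nonneg_left hcs (mul_nonneg hθ.le ha),
    sq_nonneg (θ * ‖w‖ - a * ‖A‖ * ‖d‖)]

variable (b : F) {a θ γ : ℝ}

theorem dual_step_le {ls l l' lh : F} {v v' : E} (ha : 0 ≤ a) (hθ : 0 < θ)
    (hstep : γ * θ = ‖A‖ ^ 2 * a ^ 2) (hl : θ • (l' - l) = a • (A v' - b))
    (hlh : lh = l + (a / θ) • (A v - b)) :
    θ / 2 * ‖l' - ls‖ ^ 2 - θ / 2 * ‖l - ls‖ ^ 2 ≤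
      a * ⟪lh - ls, A v' - b⟫ + γ / 2 * ‖v' - v‖ ^ 2 := by
  have hl' : l' = l + (a / θ) • (A v' - b) := by
    rw [← smul_right_inj hθ.ne', smul_add, smul_smul, mul_div_cancel₀ _ hθ.ne', ← hl]
    module
  -- `λ' - λ̂ = (a / θ) A (v' - v)`: this is the cross term that the step rule controls
  have hcross : a * ⟪l' - lh, A v' - b⟫ = a * ⟪A (v' - v), l' - l⟫ := by
    calc a * ⟪l' - lh, A v' - b⟫ = (a / θ) * ⟪A (v' - v), a • (A v' - b)⟫ := by
          rw [hl', hlh, map_sub, show l + (a / θ) • (A v' - b) - (l + (a / θ) • (A v - b)) =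
            (a / θ) • (A v' - A v) by module, real_inner_smul_left, real_inner_smul_right]
          ring
      _ = a * ⟪A (v' - v), l' - l⟫ := by
          rw [← hl, real_inner_smul_right]; field_simp
  have hinl : θ * ⟪l' - l, l' - ls⟫ = a * ⟪l' - ls, A v' - b⟫ := by
    rw [← real_inner_smul_left, hl, real_inner_smul_left, real_inner_comm]
  have hsplit : ⟪l' - ls, A v' - b⟫ = ⟪l' - lh, A v' - b⟫ + ⟪lh - ls, A v' - b⟫ := by
    rw [← inner_add_left, sub_add_sub_cancel]
  linarith [congrArg (HMul.hMul (θ / 2)) (norm_sub_sq_sub_norm_sub_sq l l' ls),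
    mul_inner_map_le A ha hθ hstep (v' - v) (l' - l), congrArg (HMul.hMul a) hsplit]

variable [CompleteSpace E] [CompleteSpace F]

theorem primal_step_eq {c : ℝ} {xs x' v v' ξ : E} {lh : F} (hxs : A xs = b)
    (hv : γ • (v' - v) = a • (c • (x' - v') - (ξ + adjoint A lh))) :
    γ / 2 * ‖v' - xs‖ ^ 2 - γ / 2 * ‖v - xs‖ ^ 2 = a * c * ⟪x' - v', v' - xs⟫
      - a * ⟪ξ, v' - xs⟫ - a * ⟪lh, A v' - b⟫ - γ / 2 * ‖v' - v‖ ^ 2 := by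
  have hinv : γ * ⟪v' - v, v' - xs⟫ =
      a * c * ⟪x' - v', v' - xs⟫ - a * ⟪ξ, v' - xs⟫ - a * ⟪lh, A v' - b⟫ := by
    rw [← real_inner_smul_left, hv]
    simp only [real_inner_smul_left, inner_sub_left, inner_add_left, adjoint_inner_left,
      map_sub, hxs]
    ring
  linarith [congrArg (HMul.hMul (γ / 2)) (norm_sub_sq_sub_norm_sub_sq v v' xs)]

variable (g : E → ℝ) (xs : E) (ls : F)

/-- `E_k` of the scheme, with `L_β(x*, λ) = f_β(x*)` since `A x* = b`. -/
noncomputable def lyapunov (γ θ : ℝ) (x v : E) (l : F) : ℝ :=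
  g x - g xs + ⟪ls, A x - b⟫ + γ / 2 * ‖v - xs‖ ^ 2 + θ / 2 * ‖l - ls‖ ^ 2

theorem lyapunov_step {θ' γ' c : ℝ} {x x' v v' ξ : E} {l l' lh : F}
    (ha : 0 < a) (hθ : 0 < θ) (hc : 0 ≤ c) (hxs : A xs = b)
    (hθ' : θ' = θ / (1 + a)) (hγ' : γ' = (γ + c * a) / (1 + a))
    (hstep : γ * θ = ‖A‖ ^ 2 * a ^ 2)
    (hgx : g x' + ⟪ξ, x - x'⟫ + c / 2 * ‖x - x'‖ ^ 2 ≤ g x)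
    (hgxs : g x' + ⟪ξ, xs - x'⟫ + c / 2 * ‖xs - x'‖ ^ 2 ≤ g xs)
    (hprim : a⁻¹ • (x' - x) = v' - x')
    (hdual : (θ / a) • (l' - l) = A v' - b)
    (hlh : lh = l + (a / θ) • (A v - b))
    (hvup : (γ / a) • (v' - v) = c • (x' - v') - (ξ + adjoint A lh)) :
    lyapunov A b g xs ls γ' θ' x' v' l' - lyapunov A b g xs ls γ θ x v l ≤
      -(a * lyapunov A b g xs ls γ' θ' x' v' l') := by
  have hx' : x' - x = a • (v' - x') := (inv_smul_eq_iff₀ ha.ne').mp hprim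
  have hx : x - x' = a • (x' - v') := by rw [← neg_sub, hx', ← smul_neg, neg_sub]
  have hfx : g x' + a * ⟪ξ, x' - v'⟫ ≤ g x := by
    rw [hx, real_inner_smul_right] at hgx
    nlinarith [sq_nonneg ‖a • (x' - v')‖]
  have hmult : (1 + a) * ⟪ls, A x' - b⟫ = ⟪ls, A x - b⟫ + a * ⟪ls, A v' - b⟫ := by
    have h : (1 + a) • (A x' - b) = (A x - b) + a • (A v' - b) := by
      have := congrArg A hx'
      rw [map_sub, map_smul, map_sub] at this
      linear_combination (norm := module) this
    simpa only [inner_add_right, real_inner_smul_right] using congrArg (⟪ls, ·⟫) h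
  have hdual' := dual_step_le A b (ls := ls) ha.le hθ hstep
    (smul_eq_smul_of_div_smul_eq ha.ne' hdual) hlh
  have hprimal := primal_step_eq A b hxs (smul_eq_smul_of_div_smul_eq ha.ne' hvup)
  have hsplit : ‖xs - x'‖ ^ 2 = ‖x' - v'‖ ^ 2 + 2 * ⟪x' - v', v' - xs⟫ + ‖v' - xs‖ ^ 2 := by
    rw [norm_sub_rev, ← norm_add_sq_real, sub_add_sub_cancel]
  have hξ : ⟪ξ, xs - x'⟫ = -(⟪ξ, x' - v'⟫ + ⟪ξ, v' - xs⟫) := by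
    rw [← inner_add_right, ← inner_neg_right, neg_add, neg_sub, neg_sub, add_comm,
      sub_add_sub_cancel]
  have hlh_inner : ⟪lh - ls, A v' - b⟫ = ⟪lh, A v' - b⟫ - ⟪ls, A v' - b⟫ := inner_sub_left _ _ _
  have hE' : (1 + a) * lyapunov A b g xs ls γ' θ' x' v' l' =
      (1 + a) * (g x' - g xs + ⟪ls, A x' - b⟫) + (γ + c * a) / 2 * ‖v' - xs‖ ^ 2
        + θ / 2 * ‖l' - ls‖ ^ 2 := by
    simp only [lyapunov, hθ', hγ']
    field_simp
  suffices (1 + a) * lyapunov A b g xs ls γ' θ' x' v' l' ≤ lyapunov A b g xs ls γ θ x v l by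
    linarith
  rw [hE', lyapunov]
  -- the `μ_β`-terms add up to `-(a c / 2) ‖x' - v'‖²`
  have hpos : 0 ≤ a * c * ‖x' - v'‖ ^ 2 := by positivity
  linarith [mul_le_mul_of_nonneg_left hgxs ha.le, congrArg (HMul.hMul a) hξ,
    congrArg (HMul.hMul (a * c / 2)) hsplit, congrArg (HMul.hMul a) hlh_inner]

end Lyapunov

theorem semi_implicit_scheme_contraction_general {n m : ℕ}
    (X : Set (EuclideanSpace ℝ (Fin n)))
    (f : EuclideanSpace ℝ (Fin n) → ℝ)
    (hfcv : ConvexOn ℝ Set.univ f)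
    (A : EuclideanSpace ℝ (Fin n) →L[ℝ] EuclideanSpace ℝ (Fin m))
    (b : EuclideanSpace ℝ (Fin m))
    (μ β μβ : ℝ) (hμ : 0 ≤ μ) (hβ : 0 ≤ β)
    (hμβ : μβ = μ + β * sigmaMin A ^ 2)
    (hsc : ∀ x ∈ X, ∀ y ∈ X, ∀ p ∈ subdiff f x,
      f x + ⟪p, y - x⟫ + μ / 2 * ‖y - x‖ ^ 2 ≤ f y)
    (fβ : EuclideanSpace ℝ (Fin n) → ℝ)
    (hfβ : ∀ z, fβ z = f z + β / 2 * ‖A z - b‖ ^ 2)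
    (Lβ : EuclideanSpace ℝ (Fin n) → EuclideanSpace ℝ (Fin m) → ℝ)
    (hLβ : ∀ z w, Lβ z w = fβ z + ⟪w, A z - b⟫)
    (xs : EuclideanSpace ℝ (Fin n)) (ls : EuclideanSpace ℝ (Fin m))
    (hxs : xs ∈ X) (hKKT1 : A xs = b)
    (θ γ α : ℕ → ℝ)
    (hα : ∀ k, 0 < α k) (hθ0 : θ 0 = 1)
    (hθ : ∀ k, θ (k + 1) = θ k / (1 + α k))
    (hγ : ∀ k, γ (k + 1) = (γ k + μβ * α k) / (1 + α k))
    (lam : ℕ → EuclideanSpace ℝ (Fin m))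
    (x v : ℕ → EuclideanSpace ℝ (Fin n))
    (hx0 : x 0 ∈ X)
    (hdual : ∀ k, (θ k / α k) • (lam (k + 1) - lam k) = A (v (k + 1)) - b)
    (hprim : ∀ k, (α k)⁻¹ • (x (k + 1) - x k) = v (k + 1) - x (k + 1))
    (lamhat : ℕ → EuclideanSpace ℝ (Fin m))
    (hlamhat : ∀ k, lamhat k = lam k + (α k / θ k) • (A (v k) - b))
    (hvup : ∀ k, ∃ ξ ∈ subdiff fβ (x (k + 1)) + normalCone X (x (k + 1)),
      (γ k / α k) • (v (k + 1) - v k) =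
        μβ • (x (k + 1) - v (k + 1)) -
          (ξ + (ContinuousLinearMap.adjoint A) (lamhat k)))
    (hstep : ∀ k, γ k * θ k = ‖A‖ ^ 2 * α k ^ 2)
    (Ef : ℕ → ℝ)
    (hEf : ∀ k, Ef k = Lβ (x k) ls - Lβ xs (lam k)
      + γ k / 2 * ‖v k - xs‖ ^ 2 + θ k / 2 * ‖lam k - ls‖ ^ 2) :
    (∀ k, x k ∈ X) ∧ ∀ k, Ef (k + 1) - Ef k ≤ -(α k * Ef (k + 1)) := by
  have hθpos : ∀ k, 0 < θ k := fun k => by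
    induction k with
    | zero => rw [hθ0]; exact one_pos
    | succ k ih => rw [hθ k]; exact div_pos ih (by linarith [hα k])
  have hμβ0 : 0 ≤ μβ := hμβ ▸ add_nonneg hμ (mul_nonneg hβ (sq_nonneg _))
  have hE : ∀ k, Ef k = lyapunov A b fβ xs ls (γ k) (θ k) (x k) (v k) (lam k) := fun k => by
    simp only [hEf, hLβ, lyapunov, hKKT1, sub_self, inner_zero_right]
    ring
  have hstrong : StrongSubgradIneqOn X fβ μβ := by
    rw [funext hfβ, hμβ]
    exact strongSubgradIneqOn_add_penalty A b hfcv hβ fun z hz p hp y hy => hsc z hz y hy p hp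
  have hmem : ∀ k, x k ∈ X
    | 0 => hx0
    | k + 1 => (hstrong.of_mem_add_normalCone (hvup k).choose_spec.1).1
  refine ⟨hmem, fun k => ?_⟩
  obtain ⟨ξ, hξ, hV⟩ := hvup k
  have hS := (hstrong.of_mem_add_normalCone hξ).2
  rw [hE, hE]
  exact lyapunov_step A b fβ xs ls (hα k) (hθpos k) hμβ0 hKKT1 (hθ k) (hγ k) (hstep k)
    (hS _ (hmem k)) (hS xs hxs) (hprim k) (hdual k) (hlamhat k) hV

/-- Theorem 4.1 (contraction part): the semi-implicit scheme (4.2) with step size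
`γ_k θ_k = ‖A‖² α_k²` keeps the iterates in `X` and the Lyapunov function contracts. -/
theorem semi_implicit_scheme_contraction {n m : ℕ}
    (X : Set (EuclideanSpace ℝ (Fin n)))
    (hXne : X.Nonempty) (hXcl : IsClosed X) (hXcv : Convex ℝ X)
    (f : EuclideanSpace ℝ (Fin n) → ℝ)
    (hfcv : ConvexOn ℝ Set.univ f)
    (A : EuclideanSpace ℝ (Fin n) →L[ℝ] EuclideanSpace ℝ (Fin m))
    (b : EuclideanSpace ℝ (Fin m)) (hA : 0 < ‖A‖)
    (μ β μβ : ℝ) (hμ : 0 ≤ μ) (hβ : 0 ≤ β)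
    (hμβ : μβ = μ + β * sigmaMin A ^ 2)
    (hsc : ∀ x ∈ X, ∀ y ∈ X, ∀ p ∈ subdiff f x,
      f x + ⟪p, y - x⟫ + μ / 2 * ‖y - x‖ ^ 2 ≤ f y)
    (fβ : EuclideanSpace ℝ (Fin n) → ℝ)
    (hfβ : ∀ z, fβ z = f z + β / 2 * ‖A z - b‖ ^ 2)
    (Lβ : EuclideanSpace ℝ (Fin n) → EuclideanSpace ℝ (Fin m) → ℝ)
    (hLβ : ∀ z w, Lβ z w = fβ z + ⟪w, A z - b⟫)
    (xs : EuclideanSpace ℝ (Fin n)) (ls : EuclideanSpace ℝ (Fin m))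
    (hxs : xs ∈ X) (hKKT1 : A xs = b)
    (hKKT2 : ∃ p ∈ subdiff f xs, ∃ q ∈ normalCone X xs,
      p + q + (ContinuousLinearMap.adjoint A) ls = 0)
    (θ γ α : ℕ → ℝ)
    (hα : ∀ k, 0 < α k) (hθ0 : θ 0 = 1) (hγ0 : 0 < γ 0)
    (hθ : ∀ k, θ (k + 1) = θ k / (1 + α k))
    (hγ : ∀ k, γ (k + 1) = (γ k + μβ * α k) / (1 + α k))
    (lam : ℕ → EuclideanSpace ℝ (Fin m))
    (x v : ℕ → EuclideanSpace ℝ (Fin n))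
    (hx0 : x 0 ∈ X)
    (hdual : ∀ k, (θ k / α k) • (lam (k + 1) - lam k) = A (v (k + 1)) - b)
    (hprim : ∀ k, (α k)⁻¹ • (x (k + 1) - x k) = v (k + 1) - x (k + 1))
    (lamhat : ℕ → EuclideanSpace ℝ (Fin m))
    (hlamhat : ∀ k, lamhat k = lam k + (α k / θ k) • (A (v k) - b))
    (hvup : ∀ k, ∃ ξ ∈ subdiff fβ (x (k + 1)) + normalCone X (x (k + 1)),
      (γ k / α k) • (v (k + 1) - v k) =
        μβ • (x (k + 1) - v (k + 1)) -
          (ξ + (ContinuousLinearMap.adjoint A) (lamhat k)))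
    (hstep : ∀ k, γ k * θ k = ‖A‖ ^ 2 * α k ^ 2)
    (Ef : ℕ → ℝ)
    (hEf : ∀ k, Ef k = Lβ (x k) ls - Lβ xs (lam k)
      + γ k / 2 * ‖v k - xs‖ ^ 2 + θ k / 2 * ‖lam k - ls‖ ^ 2) :
    (∀ k, x k ∈ X) ∧ ∀ k, Ef (k + 1) - Ef k ≤ -(α k * Ef (k + 1)) :=
  semi_implicit_scheme_contraction_general X f hfcv A b μ β μβ hμ hβ hμβ hsc fβ hfβ Lβ hLβ xs ls hxs
    hKKT1 θ γ α hα hθ0 hθ hγ lam x v hx0 hdual hprim lamhat hlamhat hvup hstep Ef hEf
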